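/- Let 𝔤 be a finite-dimensional real 2-step nilpotent Lie algebra equipped with a norm ‖·‖, and let d be a metric on 𝔤 that is left-invariant for the group law ∗ (i.e. d(g∗p, g∗q) = d(p,q) for all g, p, q) and such that every d-bounded subset of 𝔤 is ‖·‖-bounded. Let φ, ψ : 𝔤 → 𝔤 be Lie algebra automorphisms (hence group automorphisms of (𝔤,∗)). If there exists C > 0 with d(φ(p), ψ(p)) ≤ C for every p ∈ 𝔤, then φ = ψ. -/
import Mathlib


/-- The group product `x∗y = x + y + (1/2)⁅x,y⁆` of the model group. -/
noncomputable def gmul {L : Type*} [NormedAddCommGroup L] [NormedSpace ℝ L]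
    (bracket : L →ₗ[ℝ] L →ₗ[ℝ] L) (x y : L) : L :=
  x + y + (2⁻¹ : ℝ) • bracket x y

lemma aux_quad_bounded {L : Type*} [NormedAddCommGroup L] [NormedSpace ℝ L]
    (v w : L) (M : ℝ) (h : ∀ t : ℝ, ‖t • v + t ^ 2 • w‖ ≤ M) : v = 0 := by
  have hM0 : 0 ≤ M := by simpa using h 0
  have hw : w = 0 := by
    by_contra hw
    have hwpos : 0 < ‖w‖ := norm_pos_iff.mpr hw
    set t := max 1 ((M + 1) / ‖w‖) with ht
    have h1 := h t
    have h2 := h (-t)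
    have key : ‖(2 * t ^ 2) • w‖ ≤ 2 * M := by
      have heq : (2 * t ^ 2) • w = (t • v + t ^ 2 • w) + ((-t) • v + (-t) ^ 2 • w) := by
        module
      rw [heq]
      exact (norm_add_le _ _).trans (by linarith)
    rw [norm_smul, Real.norm_eq_abs] at key
    have ht1 : (1 : ℝ) ≤ t := le_max_left _ _
    have ht2 : (M + 1) / ‖w‖ ≤ t := le_max_right _ _
    rw [div_le_iff₀ hwpos] at ht2
    have habs : |2 * t ^ 2| = 2 * t ^ 2 := abs_of_pos (by positivity)
    nlinarith [mul_le_mul_of_nonneg_left ht2 (le_trans zero_le_one ht1), norm_nonneg w]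
  by_contra hv
  have hvpos : 0 < ‖v‖ := norm_pos_iff.mpr hv
  set t := max 1 ((M + 1) / ‖v‖) with ht
  have h1 := h t
  rw [hw, smul_zero, add_zero, norm_smul, Real.norm_eq_abs] at h1
  have ht1 : (1 : ℝ) ≤ t := le_max_left _ _
  have ht2 : (M + 1) / ‖v‖ ≤ t := le_max_right _ _
  rw [div_le_iff₀ hvpos] at ht2
  have habs : |t| = t := abs_of_pos (by linarith)
  rw [habs] at h1
  linarith

/-- on a 2-step nilpotent group with a left-invariant metric `d` whose
bounded sets are norm-bounded, two automorphisms at bounded distance coincide. -/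
theorem stmt_18 {L : Type*} [NormedAddCommGroup L] [NormedSpace ℝ L] [FiniteDimensional ℝ L]
    (bracket : L →ₗ[ℝ] L →ₗ[ℝ] L)
    (halt : ∀ x : L, bracket x x = 0)
    (h2step : ∀ x y z : L, bracket (bracket x y) z = 0)
    (d : L → L → ℝ)
    -- `d` is a metric
    (hd_eq : ∀ x y : L, d x y = 0 ↔ x = y)
    (hd_symm : ∀ x y : L, d x y = d y x)
    (hd_tri : ∀ x y z : L, d x z ≤ d x y + d y z)
    -- `d` is left-invariant for the group law `∗`
    (hd_inv : ∀ g p q : L, d (gmul bracket g p) (gmul bracket g q) = d p q)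
    -- every `d`-bounded subset is norm-bounded
    (hbdd : ∀ S : Set L, (∃ R : ℝ, ∀ x ∈ S, ∀ y ∈ S, d x y ≤ R) →
      ∃ M : ℝ, ∀ x ∈ S, ‖x‖ ≤ M)
    -- `φ`, `ψ` are Lie algebra automorphisms (hence group automorphisms of `(𝔤,∗)`)
    (φ ψ : L ≃ₗ[ℝ] L)
    (hφ : ∀ x y : L, φ (bracket x y) = bracket (φ x) (φ y))
    (hψ : ∀ x y : L, ψ (bracket x y) = bracket (ψ x) (ψ y))
    -- `φ` and `ψ` are at bounded distance
    (hC : ∃ C > (0:ℝ), ∀ p : L, d (φ p) (ψ p) ≤ C) :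
    ∀ p : L, φ p = ψ p := by
  obtain ⟨C, hCpos, hC⟩ := hC
  intro p
  -- the displacement function
  set f : ℝ → L := fun t => gmul bracket (-(φ (t • p))) (ψ (t • p)) with hf
  have hzero : ∀ c : L, gmul bracket (-c) c = 0 := by
    intro c
    simp [gmul, halt c]
  have hd0 : ∀ t : ℝ, d 0 (f t) ≤ C := by
    intro t
    have h := hd_inv (-(φ (t • p))) (φ (t • p)) (ψ (t • p))
    rw [hzero] at h
    show d 0 (gmul bracket (-(φ (t • p))) (ψ (t • p))) ≤ C
    rw [h]
    exact hC (t • p)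
  obtain ⟨M, hM⟩ := hbdd (Set.range f) ⟨2 * C, by
    rintro x ⟨s, rfl⟩ y ⟨t, rfl⟩
    calc d (f s) (f t) ≤ d (f s) 0 + d 0 (f t) := hd_tri _ _ _
      _ ≤ C + C := add_le_add (by rw [hd_symm]; exact hd0 s) (hd0 t)
      _ = 2 * C := by ring⟩
  have hbound : ∀ t : ℝ, ‖t • (ψ p - φ p) + t ^ 2 • (-(2⁻¹ : ℝ) • bracket (φ p) (ψ p))‖ ≤ M := by
    intro t
    have hft : f t = t • (ψ p - φ p) + t ^ 2 • (-(2⁻¹ : ℝ) • bracket (φ p) (ψ p)) := by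
      rw [hf]
      simp only [map_smul, gmul, map_neg, LinearMap.neg_apply, LinearMap.smul_apply, map_smul]
      module
    rw [← hft]
    exact hM (f t) ⟨t, rfl⟩
  have := aux_quad_bounded (ψ p - φ p) (-(2⁻¹ : ℝ) • bracket (φ p) (ψ p)) M hbound
  have : ψ p - φ p = 0 := this
  linear_combination (norm := module) -this
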